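/- arXiv:1711.07043 — 4 statements merged into one kernel-verified Lean document; each statement's English description precedes it below -/
import Mathlib

section
/- Let Λ be an artin algebra and X a contravariantly finite subcategory of mod-Λ containing all finitely generated projective Λ-modules and closed under syzygies. Then for every X_0 in X, the projective dimension of ζ^X_{X_0} as an object of mod-X is at most 1. Moreover, if X_0 is a finitely generated projective Λ-module, then ζ^X_{X_0} ≅ Hom(-,X_0)|_X is a projective object of mod-X. -/
/- Common setup: right modules over a ring are realized as left modules over the opposite
ring; `mod-X` (finitely presented additive functors on a subcategory `X` of `mod-Λ`) is
realized inside the abelian category of contravariant `AddCommGrp`-valued functors on `X`. -/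

open CategoryTheory CategoryTheory.Limits Opposite

universe u

noncomputable section

namespace RelAus

attribute [local instance] CategoryTheory.Abelian.hasFiniteBiproducts

/-- `N` is a direct summand of `M`. -/
def IsDirectSummand {C : Type*} [Category C] (N M : C) : Prop :=
  ∃ (i : N ⟶ M) (r : M ⟶ N), i ≫ r = 𝟙 N

/-- `M ∈ add Xbar`: `M` is a direct summand of a finite direct sum of copies of `Xbar`. -/
def InAdd {R : Type u} [Ring R] (Xbar M : ModuleCat.{u} R) : Prop :=
  ∃ n : ℕ, IsDirectSummand M (ModuleCat.of R (Fin n → Xbar))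

/-- `Xbar` is an additive generator of the class `𝒮` of modules: `𝒮 = add Xbar`. -/
def IsAddGen {R : Type u} [Ring R] (𝒮 : Set (ModuleCat.{u} R)) (Xbar : ModuleCat.{u} R) : Prop :=
  Xbar ∈ 𝒮 ∧ ∀ M : ModuleCat.{u} R, M ∈ 𝒮 ↔ InAdd Xbar M

/-- An object of an additive category is indecomposable if it is nonzero and in any biproduct
decomposition one of the two factors is zero. -/
def IsIndecObj {C : Type*} [Category C] [Preadditive C] [HasBinaryBiproducts C] (N : C) : Prop :=
  ¬ IsZero N ∧ ∀ A B : C, Nonempty (N ≅ A ⊞ B) → IsZero A ∨ IsZero B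

/-- The cardinality of the set of isomorphism classes of indecomposable direct summands
of the module `T`. -/
def numIndecSummands {R : Type u} [Ring R] (T : ModuleCat.{u} R) : Cardinal :=
  Cardinal.mk {q : _root_.Quotient (isIsomorphicSetoid (ModuleCat.{u} R)) //
    ∃ N : ModuleCat.{u} R, Quotient.mk (isIsomorphicSetoid _) N = q ∧
      IsIndecObj N ∧ IsDirectSummand N T}

/-- The cardinality of the set of isomorphism classes of indecomposable (finitely generated)
projective `R`-modules. -/
def numIndecProj (R : Type u) [Ring R] : Cardinal :=
  Cardinal.mk {q : _root_.Quotient (isIsomorphicSetoid (ModuleCat.{u} R)) //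
    ∃ N : ModuleCat.{u} R, Quotient.mk (isIsomorphicSetoid _) N = q ∧
      IsIndecObj N ∧ Projective N ∧ Module.Finite R N}

/-- `T` has projective dimension at most one: there is a short exact sequence
`0 → P₁ → P₀ → T → 0` with `P₁`, `P₀` projective. -/
def ModPdLeOne {R : Type u} [Ring R] (T : ModuleCat.{u} R) : Prop :=
  ∃ (P₁ P₀ : ModuleCat.{u} R) (i : P₁ ⟶ P₀) (p : P₀ ⟶ T) (w : i ≫ p = 0),
    Projective P₁ ∧ Projective P₀ ∧ (ShortComplex.mk i p w).ShortExact

/-- `T` has injective dimension at most one: there is a short exact sequence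
`0 → T → I₀ → I₁ → 0` with `I₀`, `I₁` injective. -/
def ModIdLeOne {R : Type u} [Ring R] (T : ModuleCat.{u} R) : Prop :=
  ∃ (I₀ I₁ : ModuleCat.{u} R) (i : T ⟶ I₀) (p : I₀ ⟶ I₁) (w : i ≫ p = 0),
    Injective I₀ ∧ Injective I₁ ∧ (ShortComplex.mk i p w).ShortExact

/-- `T` is rigid, i.e. `Ext¹_R(T,T) = 0`: every self-extension of `T` splits. -/
def ModRigid {R : Type u} [Ring R] (T : ModuleCat.{u} R) : Prop :=
  ∀ (E : ModuleCat.{u} R) (i : T ⟶ E) (p : E ⟶ T) (w : i ≫ p = 0),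
    (ShortComplex.mk i p w).ShortExact → Nonempty (ShortComplex.mk i p w).Splitting

/-- `T` is a tilting `R`-module: `pd T ≤ 1`, `Ext¹_R(T,T) = 0`, and the number of isomorphism
classes of indecomposable direct summands of `T` equals the number of isomorphism classes of
indecomposable projective `R`-modules. -/
structure IsTiltingModule {R : Type u} [Ring R] (T : ModuleCat.{u} R) : Prop where
  pd_le_one : ModPdLeOne T
  rigid : ModRigid T
  summands : numIndecSummands T = numIndecProj R

/-- `T` is a cotilting `R`-module: `id T ≤ 1`, `Ext¹_R(T,T) = 0`, and the same counting
condition as for tilting modules. -/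
structure IsCotiltingModule {R : Type u} [Ring R] (T : ModuleCat.{u} R) : Prop where
  id_le_one : ModIdLeOne T
  rigid : ModRigid T
  summands : numIndecSummands T = numIndecProj R

/-- `M` is a (finitely generated) Gorenstein projective `R`-module: `M` is a syzygy of a
totally acyclic complex of finitely generated projective modules, i.e. of an acyclic complex
`P` of projectives such that `Hom_R(P, Q)` is acyclic for every projective `Q`. -/
def IsGProj {R : Type u} [Ring R] (M : ModuleCat.{u} R) : Prop :=
  ∃ P : CochainComplex (ModuleCat.{u} R) ℤ,
    (∀ n, Projective (P.X n)) ∧ (∀ n, Module.Finite R (P.X n)) ∧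
    (∀ n, P.ExactAt n) ∧
    (∀ Q : ModuleCat.{u} R, Projective Q →
      ∀ n, (((preadditiveYoneda.obj Q).mapHomologicalComplex _).obj P.op).ExactAt n) ∧
    ∃ n : ℤ, Nonempty (M ≅ kernel (P.d n (n + 1)))

/-- The class of finitely generated Gorenstein projective `R`-modules.  Applied to `R = Λᵐᵒᵖ`
this is `Gprj-Λ`, the Gorenstein projective right `Λ`-modules. -/
def GprjSet (R : Type u) [Ring R] : Set (ModuleCat.{u} R) :=
  {M | Module.Finite R M ∧ IsGProj M}

/-- The category of finitely generated `R`-modules. -/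
abbrev fgMod (R : Type u) [Ring R] := ObjectProperty.FullSubcategory (fun M : ModuleCat.{u} R => Module.Finite R M)

/-- `M` is basic: no indecomposable module occurs twice in a direct sum decomposition. -/
def IsBasic {R : Type u} [Ring R] (M : ModuleCat.{u} R) : Prop :=
  ∀ (N A : ModuleCat.{u} R), IsIndecObj N → ¬ Nonempty (M ≅ (N ⊞ N) ⊞ A)

/-- Two rings are Morita equivalent if their categories of finitely generated modules are
equivalent.  Applied to the opposite rings, this says that the categories of finitely
generated right modules are equivalent. -/
def MoritaEq (R S : Type u) [Ring R] [Ring S] : Prop :=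
  Nonempty (fgMod R ≌ fgMod S)

/-- A ring `A` is right coherent: every finitely generated right ideal of `A` (i.e. left ideal
of `Aᵐᵒᵖ`) is finitely presented as a right `A`-module. -/
def RightCoherent (A : Type u) [Ring A] : Prop :=
  ∀ I : Ideal Aᵐᵒᵖ, I.FG → Module.FinitePresentation Aᵐᵒᵖ I

/-- `Λ` is an (Iwanaga-)Gorenstein ring of G-dimension one: the injective dimension of `Λ`
as a right module over itself and as a left module over itself are both equal to `1`. -/
def GorensteinDimOne (Λ : Type u) [Ring Λ] : Prop :=
  (ModIdLeOne (ModuleCat.of Λᵐᵒᵖ Λ) ∧ ¬ Injective (ModuleCat.of Λᵐᵒᵖ Λ)) ∧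
  (ModIdLeOne (ModuleCat.of Λ Λ) ∧ ¬ Injective (ModuleCat.of Λ Λ))

variable {Λ : Type u} [Ring Λ]

/-- The category of right `Λ`-modules, realized as left modules over `Λᵐᵒᵖ`. -/
abbrev RMod (Λ : Type u) [Ring Λ] := ModuleCat.{u} Λᵐᵒᵖ

/-- Given the end `ε : Q ⟶ Xbar` of a projective presentation of `Xbar`, the evaluation
`T = ζ^X_{Xbar}(Xbar)` of the intermediate extension at `Xbar`: concretely, it is the set of
endomorphisms of `Xbar` that factor through `ε`, which is a right ideal of
`Γ = End_Λ(Xbar)`, i.e. a `Γᵐᵒᵖ`-submodule of `Γ` (right `Γ`-modules being realized as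
`Γᵐᵒᵖ`-modules). -/
def zetaEvalSub {Q Xbar : RMod Λ} (ε : Q ⟶ Xbar) :
    Submodule (End Xbar)ᵐᵒᵖ (End Xbar) where
  carrier := {g : End Xbar | ∃ h : Xbar ⟶ Q, h ≫ ε = g}
  add_mem' := by
    rintro a b ⟨h₁, rfl⟩ ⟨h₂, rfl⟩
    exact ⟨h₁ + h₂, by simp [Preadditive.add_comp]⟩
  zero_mem' := ⟨0, by simp⟩
  smul_mem' := by
    rintro e g ⟨h, rfl⟩
    exact ⟨e.unop ≫ h, by simp [Category.assoc]⟩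

/-- `Xm` lies in `⊥Λ`, i.e. `Ext^i_Λ(Xm, Λ) = 0` for all `i ≥ 1`, where `Λ` is regarded as a
right module over itself. -/
def MemPerp [HasExt.{u+1} (RMod Λ)] (Xm : RMod Λ) : Prop :=
  ∀ i : ℕ, 1 ≤ i → ∀ x : Abelian.Ext Xm (ModuleCat.of Λᵐᵒᵖ Λ) i, x = 0

/-- The standing hypotheses on a class `𝒳` of right `Λ`-modules: it consists of modules
belonging to `mod-Λ` (described by the predicate `memP`), it is additively closed and closed
under direct summands (hence a full additive subcategory of `mod-Λ` closed under summands),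
it contains all the projective modules of `mod-Λ`, and it is contravariantly finite in
`mod-Λ`, i.e. every module in `mod-Λ` has a right `𝒳`-approximation. -/
structure GoodSub (memP : RMod Λ → Prop) (𝒳 : Set (RMod Λ)) : Prop where
  mem_mod : ∀ M ∈ 𝒳, memP M
  sum_mem : ∀ M N : RMod Λ, M ∈ 𝒳 → N ∈ 𝒳 → ModuleCat.of Λᵐᵒᵖ (M × N) ∈ 𝒳
  summand_mem : ∀ M N : RMod Λ, M ∈ 𝒳 → IsDirectSummand N M → N ∈ 𝒳
  proj_mem : ∀ P : RMod Λ, memP P → Projective P → P ∈ 𝒳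
  approx : ∀ M : RMod Λ, memP M → ∃ X₀ ∈ 𝒳, ∃ f : X₀ ⟶ M,
    ∀ X' ∈ 𝒳, ∀ g : X' ⟶ M, ∃ h : X' ⟶ X₀, h ≫ f = g

/-- `𝒳` is closed under syzygies: for every short exact sequence `0 → Ω → P → X' → 0` with
`X' ∈ 𝒳` and `P` a finitely generated projective module, `Ω ∈ 𝒳`. -/
def ClosedUnderSyzygies (𝒳 : Set (RMod Λ)) : Prop :=
  ∀ (Ω P X' : RMod Λ), X' ∈ 𝒳 → Projective P → Module.Finite Λᵐᵒᵖ P →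
    ∀ (i : Ω ⟶ P) (p : P ⟶ X') (w : i ≫ p = 0),
      (ShortComplex.mk i p w).ShortExact → Ω ∈ 𝒳

/-- `𝒳` is closed under submodules. -/
def ClosedUnderSubmodules (𝒳 : Set (RMod Λ)) : Prop :=
  ∀ (N X' : RMod Λ), X' ∈ 𝒳 → ∀ i : N ⟶ X', Mono i → N ∈ 𝒳

section FunctorCategory

variable (𝒳 : Set (RMod Λ))

/-- The subcategory `X`, as a full subcategory of the category of right `Λ`-modules. -/
abbrev XCat := ObjectProperty.FullSubcategory (fun M : RMod Λ => M ∈ 𝒳)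

/-- The ambient abelian category of contravariant `AddCommGrp`-valued functors on `X`;
`mod-X` is its full subcategory of finitely presented functors (see `FinPres`). -/
abbrev FunCat := (XCat 𝒳)ᵒᵖ ⥤ AddCommGrpCat.{u}

/-- The restricted Yoneda functor `M ↦ Hom_Λ(-, M)|_X`.  On an arbitrary module `M` it
gives `θ_ρ(M)`; on objects of `X` it gives the representable functors, which are exactly the
projective objects of `mod-X`. -/
def resY : RMod Λ ⥤ FunCat 𝒳 :=
  preadditiveYoneda ⋙
    (Functor.whiskeringLeft (XCat 𝒳)ᵒᵖ (RMod Λ)ᵒᵖ AddCommGrpCat.{u}).obj (ObjectProperty.ι _).op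

/-- `F` is a finitely presented functor on `X`, i.e. an object of `mod-X`: there is an exact
sequence `Hom(-,X₁)|_X ⟶ Hom(-,X₀)|_X ⟶ F ⟶ 0` with `X₁, X₀ ∈ 𝒳`. -/
def FinPres (F : FunCat 𝒳) : Prop :=
  ∃ (X₁ X₀ : RMod Λ) (_ : X₁ ∈ 𝒳) (_ : X₀ ∈ 𝒳) (d : X₁ ⟶ X₀),
    Nonempty (F ≅ cokernel ((resY 𝒳).map d))

/-- `F` vanishes on all projective `Λ`-modules, i.e. `F` lies in `mod₀-X`. -/
def Vanish0 (F : FunCat 𝒳) : Prop :=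
  ∀ P : XCat 𝒳, Projective P.obj → IsZero (F.obj (op P))

lemma resY_comp_zero {P Q M : RMod Λ} (d : P ⟶ Q) (ε : Q ⟶ M) (w : d ≫ ε = 0) :
    (resY 𝒳).map d ≫ (resY 𝒳).map ε = 0 := by
  ext Z g
  erw [comp_apply]
  show (_ ≫ d) ≫ ε = (0 : ((resY 𝒳).obj M).obj Z)
  erw [Category.assoc, w, comp_zero]
  rfl

/-- Given a projective presentation `P ⟶ Q ⟶ M ⟶ 0` of `M`, the canonical natural map
`γ_M : θ_λ(M) ⟶ θ_ρ(M)` induced by the identity of `M`, where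
`θ_λ(M) = coker(Hom(-,P)|_X → Hom(-,Q)|_X)` and `θ_ρ(M) = Hom(-,M)|_X`. -/
def gammaMap {P Q M : RMod Λ} (d : P ⟶ Q) (ε : Q ⟶ M) (w : d ≫ ε = 0) :
    cokernel ((resY 𝒳).map d) ⟶ (resY 𝒳).obj M :=
  cokernel.desc _ ((resY 𝒳).map ε) (resY_comp_zero 𝒳 d ε w)

/-- The intermediate extension `ζ^X_M := Im (γ_M)`. -/
def zetaObj {P Q M : RMod Λ} (d : P ⟶ Q) (ε : Q ⟶ M) (w : d ≫ ε = 0) : FunCat 𝒳 :=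
  image (gammaMap 𝒳 d ε w)

/-- The unit map `coker(Hom(-,X₁)|_X → Hom(-,X₀)|_X) ⟶ Hom(-, coker(X₁ → X₀))|_X`, i.e.
the unit `F ⟶ θ_ρ θ (F)` of the adjunction `(θ, θ_ρ)` evaluated on a functor presented by
`d' : X₁ ⟶ X₀`. -/
def unitMap {X₁ X₀ : RMod Λ} (d' : X₁ ⟶ X₀) :
    cokernel ((resY 𝒳).map d') ⟶ (resY 𝒳).obj (cokernel d') :=
  cokernel.desc _ ((resY 𝒳).map (cokernel.π d'))
    (resY_comp_zero 𝒳 d' (cokernel.π d') (cokernel.condition d'))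

/-- In `mod-X`, `F` has projective dimension at most one: there is a short exact sequence
`0 → Hom(-,X₁)|_X → Hom(-,X₀)|_X → F → 0` by representable functors (the projective objects
of `mod-X`). -/
def PdLeOne (F : FunCat 𝒳) : Prop :=
  ∃ (X₁ X₀ : RMod Λ) (_ : X₁ ∈ 𝒳) (_ : X₀ ∈ 𝒳) (a : (resY 𝒳).obj X₁ ⟶ (resY 𝒳).obj X₀)
    (b : (resY 𝒳).obj X₀ ⟶ F) (w : a ≫ b = 0), (ShortComplex.mk a b w).ShortExact

/-- `F` lies in `Ker ℓ_λ`, where `ℓ_λ` is the left adjoint of the inclusion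
`ℓ : mod₀-X → mod-X`; equivalently (by adjunction), `F` admits no nonzero morphism to any
object of `mod₀-X`. -/
def MemKerEllLambda (F : FunCat 𝒳) : Prop :=
  ∀ G : FunCat 𝒳, FinPres 𝒳 G → Vanish0 𝒳 G → ∀ η : F ⟶ G, η = 0

/-- `F` lies in `Ker ℓ_ρ`, where `ℓ_ρ` is the right adjoint of the inclusion
`ℓ : mod₀-X → mod-X`; equivalently (by adjunction), `F` receives no nonzero morphism from
any object of `mod₀-X`. -/
def MemKerEllRho (F : FunCat 𝒳) : Prop :=
  ∀ G : FunCat 𝒳, FinPres 𝒳 G → Vanish0 𝒳 G → ∀ η : G ⟶ F, η = 0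

/-- `F` is a projective object of `mod-X`: every epimorphism of `mod-X` onto `F`'s target
lifts. -/
def ProjRelModX (F : FunCat 𝒳) : Prop :=
  ∀ (G H : FunCat 𝒳), FinPres 𝒳 G → FinPres 𝒳 H → ∀ e : G ⟶ H, Epi e →
    ∀ f : F ⟶ H, ∃ g : F ⟶ G, g ≫ e = f

end FunctorCategory

/-!
The functor `Hom(-,Q)|_X` maps onto `ζ^X_{X₀} = Im γ`, and the composite with the inclusion
`ζ^X_{X₀} ⟶ Hom(-,X₀)|_X` is `Hom(-,ε)|_X`. Since `Hom(-,·)|_X` is left exact, the kernel is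
`Hom(-,Ω X₀)|_X` with `Ω X₀ = ker ε`, which lies in `X` by closure under syzygies; this is a
projective resolution of length one. If `X₀` is projective, `ε` splits, so `γ` is epi and
`ζ^X_{X₀} ≅ Hom(-,X₀)|_X`, which is projective by the Yoneda lemma.
-/

section RestrictedYoneda

variable {Λ : Type u} [Ring Λ] (𝒳 : Set (RMod Λ))

-- Evaluated at `W`, the functor `resY 𝒳` is `Hom(W, -)`.
instance : PreservesFiniteLimits (resY 𝒳) := by
  refine preservesFiniteLimits_of_evaluation _ fun W => ?_
  exact preservesFiniteLimits_of_natIso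
    (NatIso.ofComponents (F := preadditiveCoyoneda.obj (op W.unop.obj))
      (fun _ => Iso.refl _) (fun _ => rfl))

end RestrictedYoneda

section IntermediateExtension

variable {Λ : Type u} [Ring Λ] (𝒳 : Set (RMod Λ)) {P Q M : RMod Λ}
  (d : P ⟶ Q) (ε : Q ⟶ M) (w : d ≫ ε = 0)

def zetaProj : (resY 𝒳).obj Q ⟶ zetaObj 𝒳 d ε w :=
  cokernel.π _ ≫ factorThruImage (gammaMap 𝒳 d ε w)

def zetaι : zetaObj 𝒳 d ε w ⟶ (resY 𝒳).obj M :=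
  image.ι (gammaMap 𝒳 d ε w)

instance : Epi (zetaProj 𝒳 d ε w) :=
  inferInstanceAs (Epi (cokernel.π _ ≫ factorThruImage (gammaMap 𝒳 d ε w)))

instance : Mono (zetaι 𝒳 d ε w) :=
  inferInstanceAs (Mono (image.ι (gammaMap 𝒳 d ε w)))

lemma zetaProj_comp_zetaι : zetaProj 𝒳 d ε w ≫ zetaι 𝒳 d ε w = (resY 𝒳).map ε := by
  show (cokernel.π _ ≫ factorThruImage (gammaMap 𝒳 d ε w)) ≫ image.ι _ = _
  rw [Category.assoc, image.fac, gammaMap, cokernel.π_desc]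

lemma resY_map_kernelι_comp_zetaProj :
    (resY 𝒳).map (kernel.ι ε) ≫ zetaProj 𝒳 d ε w = 0 := by
  rw [← cancel_mono (zetaι 𝒳 d ε w), Category.assoc, zetaProj_comp_zetaι,
    ← Functor.map_comp, kernel.condition, Functor.map_zero, zero_comp]

-- `resY 𝒳` preserves the kernel of `ε`, and a kernel of `zetaProj ≫ zetaι = Hom(-,ε)|_X` is one
-- of `zetaProj`.
lemma shortExact_zeta :
    (ShortComplex.mk _ _ (resY_map_kernelι_comp_zetaProj 𝒳 d ε w)).ShortExact where
  exact := ShortComplex.exact_of_f_is_kernel _ <|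
    isKernelOfComp _ _ (KernelFork.mapIsLimit _ (kernelIsKernel ε) (resY 𝒳))
      (resY_map_kernelι_comp_zetaProj 𝒳 d ε w) (zetaProj_comp_zetaι 𝒳 d ε w)

lemma pdLeOne_zetaObj (hK : kernel ε ∈ 𝒳) (hQ : Q ∈ 𝒳) : PdLeOne 𝒳 (zetaObj 𝒳 d ε w) :=
  ⟨_, _, hK, hQ, _, _, _, shortExact_zeta 𝒳 d ε w⟩

lemma isIso_zetaι [Projective M] [Epi ε] : IsIso (zetaι 𝒳 d ε w) := by
  have : IsSplitEpi ε := ⟨⟨Projective.factorThru (𝟙 M) ε, Projective.factorThru_comp _ _⟩⟩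
  have : Epi (zetaι 𝒳 d ε w) := epi_of_epi_fac (zetaProj_comp_zetaι 𝒳 d ε w)
  exact isIso_of_mono_of_epi _

end IntermediateExtension

section Projectivity

variable {Λ : Type u} [Ring Λ] (𝒳 : Set (RMod Λ))

lemma resY_hom_ext {X : RMod Λ} (hX : X ∈ 𝒳) {F : FunCat 𝒳} {α β : (resY 𝒳).obj X ⟶ F}
    (h : α.app (op ⟨X, hX⟩) (𝟙 X) = β.app (op ⟨X, hX⟩) (𝟙 X)) : α = β := by
  ext W y
  let u : W.unop ⟶ ⟨X, hX⟩ := ObjectProperty.homMk y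
  have hy : ((resY 𝒳).obj X).map u.op (𝟙 X) = y :=
    Category.comp_id (y : W.unop.obj ⟶ X)
  have hγ (γ : (resY 𝒳).obj X ⟶ F) : γ.app W y = F.map u.op (γ.app _ (𝟙 X)) :=
    (congrArg (γ.app W) hy).symm.trans (NatTrans.naturality_apply γ u.op _)
  rw [hγ α, hγ β, h]

lemma exists_resY_map_comp_eq {X W : RMod Λ} (hX : X ∈ 𝒳) {F : FunCat 𝒳}
    (q : (resY 𝒳).obj W ⟶ F) [Epi q] (f : (resY 𝒳).obj X ⟶ F) :
    ∃ x : X ⟶ W, (resY 𝒳).map x ≫ q = f := by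
  obtain ⟨x, hx⟩ : ∃ x : X ⟶ W, q.app (op ⟨X, hX⟩) x = f.app (op ⟨X, hX⟩) (𝟙 X) :=
    (AddCommGrpCat.epi_iff_surjective (q.app (op ⟨X, hX⟩))).1 inferInstance _
  exact ⟨x, resY_hom_ext 𝒳 hX ((congrArg (q.app _) (Category.id_comp x)).trans hx)⟩

lemma projRelModX_resY_obj {X : RMod Λ} (hX : X ∈ 𝒳) : ProjRelModX 𝒳 ((resY 𝒳).obj X) := by
  rintro G H ⟨W₁, W₀, -, -, p, ⟨φ⟩⟩ - e he f
  obtain ⟨x, hx⟩ := exists_resY_map_comp_eq 𝒳 hX (cokernel.π ((resY 𝒳).map p) ≫ φ.inv ≫ e) f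
  exact ⟨(resY 𝒳).map x ≫ cokernel.π _ ≫ φ.inv, by simpa only [Category.assoc] using hx⟩

lemma ProjRelModX.of_iso {F F' : FunCat 𝒳} (hF : ProjRelModX 𝒳 F) (i : F ≅ F') :
    ProjRelModX 𝒳 F' := by
  intro G H hG hH e he f
  obtain ⟨g, hg⟩ := hF G H hG hH e he (i.hom ≫ f)
  exact ⟨i.inv ≫ g, by rw [Category.assoc, hg, Iso.inv_hom_id_assoc]⟩

end Projectivity

theorem statement3_general (Λ : Type u) [Ring Λ]
    (𝒳 : Set (RMod Λ))
    (h𝒳 : GoodSub (fun M : RMod Λ => Module.Finite Λᵐᵒᵖ M) 𝒳)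
    (hsyz : ClosedUnderSyzygies 𝒳)
    (X₀ : RMod Λ) (hX₀ : X₀ ∈ 𝒳)
    (P Q : RMod Λ)
    (hQ : Projective Q) (hQf : Module.Finite Λᵐᵒᵖ Q)
    (d : P ⟶ Q) (ε : Q ⟶ X₀) (w : d ≫ ε = 0)
    (hepi : Epi ε) :
    PdLeOne 𝒳 (zetaObj 𝒳 d ε w) ∧
      (Projective X₀ →
        Nonempty (zetaObj 𝒳 d ε w ≅ (resY 𝒳).obj X₀) ∧ ProjRelModX 𝒳 (zetaObj 𝒳 d ε w)) := by
  have hK : kernel ε ∈ 𝒳 := hsyz _ Q X₀ hX₀ hQ hQf _ ε (kernel.condition ε)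
    { exact := ShortComplex.exact_of_f_is_kernel _ (kernelIsKernel ε) }
  refine ⟨pdLeOne_zetaObj 𝒳 d ε w hK (h𝒳.proj_mem Q hQf hQ), fun _ => ?_⟩
  have := isIso_zetaι 𝒳 d ε w
  let ζIso := asIso (zetaι 𝒳 d ε w)
  exact ⟨⟨ζIso⟩, (projRelModX_resY_obj 𝒳 hX₀).of_iso 𝒳 ζIso.symm⟩

/-- If moreover `X` is closed under syzygies then `pd ζ^X_{X₀} ≤ 1` in `mod-X`;
and if `X₀` is projective, then `ζ^X_{X₀} ≅ Hom(-,X₀)|_X` is a projective object of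
`mod-X`. -/
theorem statement3 (R₀ : Type u) [CommRing R₀] [IsArtinianRing R₀]
    (Λ : Type u) [Ring Λ] [Algebra R₀ Λ] [Module.Finite R₀ Λ]
    (𝒳 : Set (RMod Λ))
    (h𝒳 : GoodSub (fun M : RMod Λ => Module.Finite Λᵐᵒᵖ M) 𝒳)
    (hsyz : ClosedUnderSyzygies 𝒳)
    (X₀ : RMod Λ) (hX₀ : X₀ ∈ 𝒳)
    (P Q : RMod Λ) (hP : Projective P) (hPf : Module.Finite Λᵐᵒᵖ P)
    (hQ : Projective Q) (hQf : Module.Finite Λᵐᵒᵖ Q)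
    (d : P ⟶ Q) (ε : Q ⟶ X₀) (w : d ≫ ε = 0)
    (hepi : Epi ε) (hex : (ShortComplex.mk d ε w).Exact) :
    PdLeOne 𝒳 (zetaObj 𝒳 d ε w) ∧
      (Projective X₀ →
        Nonempty (zetaObj 𝒳 d ε w ≅ (resY 𝒳).obj X₀) ∧ ProjRelModX 𝒳 (zetaObj 𝒳 d ε w)) :=
  statement3_general Λ 𝒳 h𝒳 hsyz X₀ hX₀ P Q hQ hQf d ε w hepi

end RelAus
end
end

section
/- Let Λ be an artin algebra and X a contravariantly finite subcategory of mod-Λ containing all finitely generated projective Λ-modules and closed under submodules. Then for every M in mod-Λ, the projective dimension of the functor Hom_Λ(-,M)|_X as an object of mod-X is at most 1. -/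
/- Common setup: right modules over a ring are realized as left modules over the opposite
ring; `mod-X` (finitely presented additive functors on a subcategory `X` of `mod-Λ`) is
realized inside the abelian category of contravariant `AddCommGrp`-valued functors on `X`. -/

open CategoryTheory CategoryTheory.Limits Opposite

universe u

noncomputable section

namespace RelAus

attribute [local instance] CategoryTheory.Abelian.hasFiniteBiproducts

variable {Λ : Type u} [Ring Λ]

/-! If `f : X₀ ⟶ M` is a right `𝒳`-approximation, its kernel `K` is a submodule of `X₀ ∈ 𝒳`,
hence lies in `𝒳`. Left exactness of `Hom` and the approximation property make
`0 → Hom(-,K)|_X → Hom(-,X₀)|_X → Hom(-,M)|_X → 0` exact, a projective resolution of length one. -/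

theorem _root_.CategoryTheory.ShortComplex.exact_of_evaluation {J D : Type*} [Category J]
    [Category D] [Abelian D] (S : ShortComplex (J ⥤ D))
    (hS : ∀ j, (S.map ((evaluation J D).obj j)).Exact) : S.Exact := by
  rw [ShortComplex.exact_iff_isZero_homology]
  refine Functor.isZero _ fun j ↦ ?_
  exact (S.mapHomologyIso ((evaluation J D).obj j)).isZero_iff.1
    ((ShortComplex.exact_iff_isZero_homology _).1 (hS j))

/-- The factorization property of a right `𝒳`-approximation; `X₀ ∈ 𝒳` is not part of it. -/
def IsRightApprox (𝒳 : Set (RMod Λ)) {X₀ M : RMod Λ} (f : X₀ ⟶ M) : Prop :=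
  ∀ X' ∈ 𝒳, ∀ g : X' ⟶ M, ∃ h : X' ⟶ X₀, h ≫ f = g

section RestrictedYoneda

variable (𝒳 : Set (RMod Λ))

instance resY_map_mono {N X : RMod Λ} (i : N ⟶ X) [Mono i] : Mono ((resY 𝒳).map i) := by
  have (Y : (XCat 𝒳)ᵒᵖ) : Mono (((resY 𝒳).map i).app Y) := by
    rw [AddCommGrpCat.mono_iff_injective]
    exact fun _ _ h ↦ (cancel_mono i).1 h
  exact NatTrans.mono_of_mono_app _

lemma resY_map_epi_of_isRightApprox {X₀ M : RMod Λ} {f : X₀ ⟶ M} (hf : IsRightApprox 𝒳 f) :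
    Epi ((resY 𝒳).map f) := by
  have (Y : (XCat 𝒳)ᵒᵖ) : Epi (((resY 𝒳).map f).app Y) := by
    rw [AddCommGrpCat.epi_iff_surjective]
    exact hf Y.unop.obj Y.unop.property
  exact NatTrans.epi_of_epi_app _

lemma resY_kernel_exact {X₀ M : RMod Λ} (f : X₀ ⟶ M) :
    (ShortComplex.mk _ _ (resY_comp_zero 𝒳 (kernel.ι f) f (kernel.condition f))).Exact := by
  refine ShortComplex.exact_of_evaluation _ fun Y ↦ ?_
  rw [ShortComplex.ab_exact_iff]
  intro g (hg : (g : Y.unop.obj ⟶ X₀) ≫ f = 0)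
  exact ⟨kernel.lift f g hg, kernel.lift_ι f g hg⟩

lemma pdLeOne_resY_of_isRightApprox {X₀ M : RMod Λ} (hX₀ : X₀ ∈ 𝒳) {f : X₀ ⟶ M}
    (hf : IsRightApprox 𝒳 f) (hK : (kernel f : RMod Λ) ∈ 𝒳) :
    PdLeOne 𝒳 ((resY 𝒳).obj M) :=
  have := resY_map_epi_of_isRightApprox 𝒳 hf
  ⟨kernel f, X₀, hK, hX₀, _, _, _, { exact := resY_kernel_exact 𝒳 f }⟩

end RestrictedYoneda

theorem statement4_general (Λ : Type u) [Ring Λ]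
    (𝒳 : Set (RMod Λ))
    (h𝒳 : GoodSub (fun M : RMod Λ => Module.Finite Λᵐᵒᵖ M) 𝒳)
    (hsub : ClosedUnderSubmodules 𝒳)
    (M : RMod Λ) (hM : Module.Finite Λᵐᵒᵖ M) :
    PdLeOne 𝒳 ((resY 𝒳).obj M) := by
  obtain ⟨X₀, hX₀, f, hf⟩ := h𝒳.approx M hM
  exact pdLeOne_resY_of_isRightApprox 𝒳 hX₀ hf (hsub _ _ hX₀ (kernel.ι f) inferInstance)

/-- If `X` is closed under submodules, then for every `M ∈ mod-Λ` the functor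
`Hom_Λ(-,M)|_X` has projective dimension at most `1` in `mod-X`. -/
theorem statement4 (R₀ : Type u) [CommRing R₀] [IsArtinianRing R₀]
    (Λ : Type u) [Ring Λ] [Algebra R₀ Λ] [Module.Finite R₀ Λ]
    (𝒳 : Set (RMod Λ))
    (h𝒳 : GoodSub (fun M : RMod Λ => Module.Finite Λᵐᵒᵖ M) 𝒳)
    (hsub : ClosedUnderSubmodules 𝒳)
    (M : RMod Λ) (hM : Module.Finite Λᵐᵒᵖ M) :
    PdLeOne 𝒳 ((resY 𝒳).obj M) :=
  statement4_general Λ 𝒳 h𝒳 hsub M hM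

end RelAus
end
end

section
/- Let Λ be an artin algebra and X a contravariantly finite subcategory of mod-Λ with prj-Λ ⊆ X ⊆ ⊥Λ, closed under submodules, and of finite type with X = add(X̄). Set Γ = Aus(X) and T = ζ^X_{X̄}(X̄). Then Ker L_ρ equals the class of finitely generated Γ-modules of projective dimension at most 1, and cogen(T) ⊆ Ker L_ρ; equivalently, in mod-X, Ker ℓ_ρ = {F : pd F ≤ 1} and every subobject of a finite direct sum of copies of ζ^X_{X̄} lies in Ker ℓ_ρ. -/
/- Common setup: right modules over a ring are realized as left modules over the opposite
ring; `mod-X` (finitely presented additive functors on a subcategory `X` of `mod-Λ`) is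
realized inside the abelian category of contravariant `AddCommGrp`-valued functors on `X`. -/

open CategoryTheory CategoryTheory.Limits Opposite

universe u

noncomputable section

namespace RelAus

attribute [local instance] CategoryTheory.Abelian.hasFiniteBiproducts

variable {Λ : Type u} [Ring Λ]

/-!
An object `F` of `mod-X` lies in `Ker ℓ_ρ` as soon as `F(p)` is injective for every epimorphism
`p : Y ↠ Z` in `X`: every `Z ∈ X` is a quotient `p : P₀ ↠ Z` of a projective `P₀ ∈ X`, and a
functor `G` vanishing on projectives has `G(p) = 0`, so by naturality any `η : G ⟶ F` satisfies
`F(p) ∘ η_Z = η_{P₀} ∘ G(p) = 0`. This holds for `Hom(-,M)|_X`, hence for its subfunctor `ζ_M`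
and for every subobject of a finite sum of copies of `ζ_M`. It also holds when
`0 → Hom(-,Y₁) → Hom(-,Y₀) → F → 0` is exact: the first map is induced by a monomorphism
`α : Y₁ → Y₀`, and if `p ≫ f = g ≫ α` then `g` kills `ker p`, so it descends along `p` and `f`
factors through `α`.

Conversely, write `F = coker Hom(-,d)|_X` and factor `d : X₁ → X₀` through its image `I`, which
lies in `X` by closure under submodules. The cokernel of `Hom(-,X₁)|_X → Hom(-,I)|_X` vanishes on
projectives (lift along `X₁ ↠ I`), so its canonical map to `F ∈ Ker ℓ_ρ` is zero; thus
`Hom(-,I)|_X → Hom(-,X₀)|_X → F → 0` is exact, and `Hom(-,I)|_X → Hom(-,X₀)|_X` is mono.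
-/

section

variable {𝒳 : Set (RMod Λ)}

lemma resY_obj_hom_app {X' M : RMod Λ} (hX' : X' ∈ 𝒳)
    (a : (resY 𝒳).obj X' ⟶ (resY 𝒳).obj M) (Z : XCat 𝒳) (g : Z.obj ⟶ X') :
    a.app (op Z) g = g ≫ a.app (op ⟨X', hX'⟩) (𝟙 X') := by
  have h := NatTrans.naturality_apply a (ObjectProperty.homMk (X := Z) (Y := ⟨X', hX'⟩) g).op (𝟙 X')
  exact (congrArg (a.app (op Z)) (Category.comp_id g).symm).trans h

lemma resY_obj_hom_eq_map {X' M : RMod Λ} (hX' : X' ∈ 𝒳)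
    (a : (resY 𝒳).obj X' ⟶ (resY 𝒳).obj M) :
    a = (resY 𝒳).map (a.app (op ⟨X', hX'⟩) (𝟙 X')) := by
  ext Z g
  exact resY_obj_hom_app hX' a Z.unop g

lemma mono_resY_map {M N : RMod Λ} (f : M ⟶ N) [Mono f] : Mono ((resY 𝒳).map f) :=
  NatTrans.mono_iff_mono_app _ |>.mpr fun _ =>
    (AddCommGrpCat.mono_iff_injective _).mpr fun _ _ h => (cancel_mono f).mp h

lemma GoodSub.exists_projective_epi (h𝒳 : GoodSub (fun M : RMod Λ => Module.Finite Λᵐᵒᵖ M) 𝒳)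
    (Z : XCat 𝒳) :
    ∃ (P₀ : XCat 𝒳) (p : P₀ ⟶ Z), Projective P₀.obj ∧ Epi p.hom := by
  have := h𝒳.mem_mod Z.obj Z.property
  obtain ⟨n, π, hπ⟩ := Module.Finite.exists_fin' Λᵐᵒᵖ Z.obj
  have hfree : Projective (ModuleCat.of Λᵐᵒᵖ (Fin n → Λᵐᵒᵖ)) :=
    ModuleCat.projective_of_free (Pi.basisFun Λᵐᵒᵖ (Fin n))
  exact ⟨⟨_, h𝒳.proj_mem _ inferInstance hfree⟩, ObjectProperty.homMk (ModuleCat.ofHom π), hfree,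
    (ModuleCat.epi_iff_surjective _).mpr hπ⟩

lemma GoodSub.mono_of_mono_resY_map (h𝒳 : GoodSub (fun M : RMod Λ => Module.Finite Λᵐᵒᵖ M) 𝒳)
    {M N : RMod Λ} (α : M ⟶ N) [Mono ((resY 𝒳).map α)] :
    Mono α := by
  have hfree : Projective (ModuleCat.of Λᵐᵒᵖ Λᵐᵒᵖ) :=
    ModuleCat.projective_of_free (Module.Basis.singleton PUnit.{u+1} Λᵐᵒᵖ)
  have hinj := (AddCommGrpCat.mono_iff_injective
    (((resY 𝒳).map α).app (op ⟨_, h𝒳.proj_mem _ inferInstance hfree⟩))).mp inferInstance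
  refine (ModuleCat.mono_iff_injective α).mpr fun x y hxy => ?_
  have := @hinj (ModuleCat.ofHom (LinearMap.toSpanSingleton _ _ x))
    (ModuleCat.ofHom (LinearMap.toSpanSingleton _ _ y)) (by
      change _ ≫ α = _ ≫ α
      ext
      simpa using hxy)
  simpa using ConcreteCategory.congr_hom this 1

lemma memKerEllRho_of_mono_map (h𝒳 : GoodSub (fun M : RMod Λ => Module.Finite Λᵐᵒᵖ M) 𝒳)
    {F : FunCat 𝒳}
    (hF : ∀ {Y Z : XCat 𝒳} (p : Y ⟶ Z), Epi p.hom → Mono (F.map p.op)) :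
    MemKerEllRho 𝒳 F := by
  intro G _ hG η
  ext ⟨Z⟩ : 2
  obtain ⟨P₀, p, hP₀, hp⟩ := h𝒳.exists_projective_epi Z
  have := hF p hp
  rw [NatTrans.app_zero, ← cancel_mono (F.map p.op), ← η.naturality,
    (hG P₀ hP₀).eq_of_tgt (G.map p.op) 0, zero_comp, zero_comp]

lemma MemKerEllRho.of_mono {F F' : FunCat 𝒳} (ι : F ⟶ F') [Mono ι] (h : MemKerEllRho 𝒳 F') :
    MemKerEllRho 𝒳 F :=
  fun G hG hG₀ η => (cancel_mono ι).mp (by rw [h G hG hG₀ (η ≫ ι), zero_comp])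

lemma memKerEllRho_biproduct {J : Type*} [Finite J] {F : J → FunCat 𝒳}
    (h : ∀ j, MemKerEllRho 𝒳 (F j)) : MemKerEllRho 𝒳 (⨁ F) :=
  fun G hG hG₀ η => biproduct.hom_ext _ _ fun j => by
    rw [zero_comp]
    exact h j G hG hG₀ _

lemma memKerEllRho_resY_obj (h𝒳 : GoodSub (fun M : RMod Λ => Module.Finite Λᵐᵒᵖ M) 𝒳)
    (M : RMod Λ) : MemKerEllRho 𝒳 ((resY 𝒳).obj M) :=
  memKerEllRho_of_mono_map h𝒳 fun p _ =>
    (AddCommGrpCat.mono_iff_injective _).mpr fun _ _ h => (cancel_epi p.hom).mp h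

lemma memKerEllRho_zetaObj (h𝒳 : GoodSub (fun M : RMod Λ => Module.Finite Λᵐᵒᵖ M) 𝒳)
    {P Q M : RMod Λ} (d : P ⟶ Q) (ε : Q ⟶ M) (w : d ≫ ε = 0) :
    MemKerEllRho 𝒳 (zetaObj 𝒳 d ε w) :=
  (memKerEllRho_resY_obj h𝒳 M).of_mono (F := image (gammaMap 𝒳 d ε w)) (image.ι _)

lemma memKerEllRho_of_pdLeOne (h𝒳 : GoodSub (fun M : RMod Λ => Module.Finite Λᵐᵒᵖ M) 𝒳)
    {F : FunCat 𝒳} (hF : PdLeOne 𝒳 F) : MemKerEllRho 𝒳 F := by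
  obtain ⟨Y₁, Y₀, hY₁, -, a, b, hab, hse⟩ := hF
  have hmono : Mono a := hse.mono_f
  have : Epi b := hse.epi_g
  set α : Y₁ ⟶ Y₀ := a.app (op ⟨Y₁, hY₁⟩) (𝟙 Y₁)
  have ha : ∀ (W : XCat 𝒳) (g : W.obj ⟶ Y₁), a.app (op W) g = g ≫ α := resY_obj_hom_app hY₁ a
  have : Mono α := by
    rw [resY_obj_hom_eq_map hY₁ a] at hmono
    exact h𝒳.mono_of_mono_resY_map α
  refine memKerEllRho_of_mono_map h𝒳 fun {Y Z} p hp => ?_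
  rw [AddCommGrpCat.mono_iff_injective, injective_iff_map_eq_zero]
  intro y hy
  obtain ⟨f, rfl⟩ : ∃ f : Z.obj ⟶ Y₀, b.app (op Z) f = y :=
    (AddCommGrpCat.epi_iff_surjective (b.app (op Z))).mp inferInstance y
  replace hy : b.app (op Y) (p.hom ≫ f) = 0 := (NatTrans.naturality_apply b p.op f).trans hy
  obtain ⟨g, hg⟩ : ∃ g : Y.obj ⟶ Y₁, g ≫ α = p.hom ≫ f := by
    obtain ⟨g, hg⟩ := (ShortComplex.ab_exact_iff _).mp
      (hse.map_of_exact ((evaluation _ _).obj (op Y))).exact _ hy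
    exact ⟨g, (ha Y g).symm.trans hg⟩
  have hker : kernel.ι p.hom ≫ g = 0 := by
    rw [← cancel_mono α, Category.assoc, hg, kernel.condition_assoc, zero_comp, zero_comp]
  have hf : f = Abelian.epiDesc p.hom g hker ≫ α := by
    rw [← cancel_epi p.hom, ← Category.assoc, Abelian.comp_epiDesc, hg]
  rw [hf, ← ha]
  exact ConcreteCategory.congr_hom (NatTrans.congr_app hab (op Z)) (Abelian.epiDesc p.hom g hker)

lemma vanish0_cokernel_resY_map {X₁ X₀ : RMod Λ} (q : X₁ ⟶ X₀) [Epi q] :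
    Vanish0 𝒳 (cokernel ((resY 𝒳).map q)) := by
  intro P hP
  have : Epi (((resY 𝒳).map q).app (op P)) :=
    (AddCommGrpCat.epi_iff_surjective _).mpr fun (g : P.obj ⟶ X₀) =>
      ⟨(Projective.factorThru g q : P.obj ⟶ X₁), Projective.factorThru_comp g q⟩
  have hπ : (cokernel.π ((resY 𝒳).map q)).app (op P) = 0 := by
    rw [← cancel_epi (((resY 𝒳).map q).app (op P)), ← NatTrans.comp_app, cokernel.condition,
      NatTrans.app_zero, comp_zero]
  have hepi : Epi ((cokernel.π ((resY 𝒳).map q)).app (op P)) := inferInstance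
  rw [hπ] at hepi
  exact @IsZero.of_epi_zero _ _ _ _ _ hepi

lemma PdLeOne.of_iso {F F' : FunCat 𝒳} (e : F ≅ F') (h : PdLeOne 𝒳 F) : PdLeOne 𝒳 F' := by
  obtain ⟨X₁, X₀, hX₁, hX₀, a, b, w, hse⟩ := h
  exact ⟨X₁, X₀, hX₁, hX₀, a, b ≫ e.hom, by rw [reassoc_of% w, zero_comp],
    ShortComplex.shortExact_of_iso
      (ShortComplex.isoMk (S₁ := ShortComplex.mk a b w) (Iso.refl _) (Iso.refl _) e) hse⟩

lemma pdLeOne_cokernel_resY_map {X₁ I X₀ : RMod Λ} (hI : I ∈ 𝒳) (hX₀ : X₀ ∈ 𝒳)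
    {d : X₁ ⟶ X₀} (q : X₁ ⟶ I) (i : I ⟶ X₀) [Mono i] (hqi : q ≫ i = d)
    (h : (resY 𝒳).map i ≫ cokernel.π ((resY 𝒳).map d) = 0) :
    PdLeOne 𝒳 (cokernel ((resY 𝒳).map d)) := by
  have := mono_resY_map (𝒳 := 𝒳) i
  have hcoker := isCokernelOfComp _ _ (cokernelIsCokernel _) h
    (by rw [← hqi, Functor.map_comp] : (resY 𝒳).map q ≫ (resY 𝒳).map i = (resY 𝒳).map d)
  exact ⟨I, X₀, hI, hX₀, _, _, h, .mk (ShortComplex.exact_of_g_is_cokernel _ hcoker)⟩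

lemma pdLeOne_of_memKerEllRho (hsub : ClosedUnderSubmodules 𝒳) {F : FunCat 𝒳}
    (hfp : FinPres 𝒳 F) (hF : MemKerEllRho 𝒳 F) : PdLeOne 𝒳 F := by
  obtain ⟨X₁, X₀, hX₁, hX₀, d, ⟨e⟩⟩ := hfp
  have hI : image d ∈ 𝒳 := hsub _ X₀ hX₀ (image.ι d) inferInstance
  have hker : MemKerEllRho 𝒳 (cokernel ((resY 𝒳).map d)) := hF.of_mono e.inv
  have hw : (resY 𝒳).map (factorThruImage d) ≫ (resY 𝒳).map (image.ι d) ≫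
      cokernel.π ((resY 𝒳).map d) = 0 := by
    rw [← Functor.map_comp_assoc, image.fac, cokernel.condition]
  have hπ : (resY 𝒳).map (image.ι d) ≫ cokernel.π ((resY 𝒳).map d) = 0 := by
    have := hker _ ⟨X₁, _, hX₁, hI, factorThruImage d, ⟨Iso.refl _⟩⟩
      (vanish0_cokernel_resY_map _) (cokernel.desc _ _ hw)
    simpa [this] using (cokernel.π_desc _ _ hw).symm
  exact (pdLeOne_cokernel_resY_map hI hX₀ _ _ (image.fac d) hπ).of_iso e.symm

end

theorem statement11_general
    (Λ : Type u) [Ring Λ]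
    (𝒳 : Set (RMod Λ))
    (h𝒳 : GoodSub (fun M : RMod Λ => Module.Finite Λᵐᵒᵖ M) 𝒳)
    (hsub : ClosedUnderSubmodules 𝒳)
    (Xbar : RMod Λ)
    (P Q : RMod Λ)
    (d : P ⟶ Q) (ε : Q ⟶ Xbar) (w : d ≫ ε = 0) :
    (∀ F : FunCat 𝒳, FinPres 𝒳 F → (MemKerEllRho 𝒳 F ↔ PdLeOne 𝒳 F)) ∧
    (∀ F : FunCat 𝒳, FinPres 𝒳 F →
      ∀ (n : ℕ) (ι : F ⟶ ⨁ (fun _ : Fin n => zetaObj 𝒳 d ε w)), Mono ι →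
        MemKerEllRho 𝒳 F) :=
  ⟨fun _ hfp => ⟨pdLeOne_of_memKerEllRho hsub hfp, memKerEllRho_of_pdLeOne h𝒳⟩,
    fun _ _ _ ι _ => (memKerEllRho_biproduct fun _ => memKerEllRho_zetaObj h𝒳 d ε w).of_mono ι⟩

/-- in its `mod-X` form: `Ker ℓ_ρ` equals the class of finitely presented
functors of projective dimension at most `1`, and every (finitely presented) subobject of a
finite direct sum of copies of `ζ^X_{Xbar}` lies in `Ker ℓ_ρ`. -/
theorem statement11 (R₀ : Type u) [CommRing R₀] [IsArtinianRing R₀]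
    (Λ : Type u) [Ring Λ] [Algebra R₀ Λ] [Module.Finite R₀ Λ]
    [HasExt.{u+1} (RMod Λ)]
    (𝒳 : Set (RMod Λ))
    (h𝒳 : GoodSub (fun M : RMod Λ => Module.Finite Λᵐᵒᵖ M) 𝒳)
    (hperp : ∀ X' ∈ 𝒳, MemPerp X')
    (hsub : ClosedUnderSubmodules 𝒳)
    (Xbar : RMod Λ) (hgen : IsAddGen 𝒳 Xbar)
    (P Q : RMod Λ) (hP : Projective P) (hPf : Module.Finite Λᵐᵒᵖ P)
    (hQ : Projective Q) (hQf : Module.Finite Λᵐᵒᵖ Q)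
    (d : P ⟶ Q) (ε : Q ⟶ Xbar) (w : d ≫ ε = 0)
    (hepi : Epi ε) (hex : (ShortComplex.mk d ε w).Exact) :
    (∀ F : FunCat 𝒳, FinPres 𝒳 F → (MemKerEllRho 𝒳 F ↔ PdLeOne 𝒳 F)) ∧
    (∀ F : FunCat 𝒳, FinPres 𝒳 F →
      ∀ (n : ℕ) (ι : F ⟶ ⨁ (fun _ : Fin n => zetaObj 𝒳 d ε w)), Mono ι →
        MemKerEllRho 𝒳 F) :=
  statement11_general Λ 𝒳 h𝒳 hsub Xbar P Q d ε w

end RelAus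
end
end

section
/- Let Λ be an artin algebra and X a contravariantly finite subcategory of mod-Λ containing all finitely generated projective Λ-modules, of finite type with X = add(X̄). Then ζ^X_{X̄} lies in Ker ℓ_λ, and for every F in mod-X the object θ_λ(θ(F)) is a quotient of an object of add(ζ^X_{X̄}), i.e. θ_λθ(F) ∈ gen(ζ^X_{X̄}) in mod-X. -/
/- Common setup: right modules over a ring are realized as left modules over the opposite
ring; `mod-X` (finitely presented additive functors on a subcategory `X` of `mod-Λ`) is
realized inside the abelian category of contravariant `AddCommGrp`-valued functors on `X`. -/

open CategoryTheory CategoryTheory.Limits Opposite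

universe u

noncomputable section

namespace RelAus

attribute [local instance] CategoryTheory.Abelian.hasFiniteBiproducts

variable {Λ : Type u} [Ring Λ]

/-
Proof idea. `ζ = Im γ` is the image of `Hom(-, ε)|_X : Hom(-, Q)|_X → Hom(-, X̄)|_X`, hence a
quotient of the representable functor at the projective module `Q ∈ X`; by Yoneda, a functor
vanishing on projectives receives no nonzero map from it. For the second part, `θ_λθ(F)` is a
quotient of `Hom(-, Q')|_X`, and `Q' ∈ add X̄` gives `𝟙 = ∑ iₖ ≫ rₖ` with `iₖ : Q' → X̄`. Since
`Q'` is projective, each `iₖ` lifts through the epimorphism `ε`, so `Hom(-, iₖ)` factors through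
`ζ`, which makes `Hom(-, Q')|_X` a retract of `ζⁿ`.
-/

lemma InAdd.exists_sum_comp_eq_id {R : Type u} [Ring R] {Xbar M : ModuleCat.{u} R}
    (h : InAdd Xbar M) :
    ∃ (n : ℕ) (i : Fin n → (M ⟶ Xbar)) (r : Fin n → (Xbar ⟶ M)), ∑ k, i k ≫ r k = 𝟙 M := by
  obtain ⟨n, i, r, hir⟩ := h
  refine ⟨n, fun k => i ≫ ModuleCat.ofHom (LinearMap.proj k),
    fun k => ModuleCat.ofHom (LinearMap.single R (fun _ => Xbar) k) ≫ r, ?_⟩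
  have hpi : ∑ k : Fin n, ModuleCat.ofHom (LinearMap.proj k) ≫
      ModuleCat.ofHom (LinearMap.single R (fun _ => Xbar) k) = 𝟙 (ModuleCat.of R (Fin n → Xbar)) := by
    refine ModuleCat.hom_ext (LinearMap.ext fun x => ?_)
    simpa [ModuleCat.hom_sum] using Finset.univ_sum_single x
  have hid : i ≫ (∑ k : Fin n, ModuleCat.ofHom (LinearMap.proj k) ≫
      ModuleCat.ofHom (LinearMap.single R (fun _ => Xbar) k)) ≫ r = 𝟙 M := by
    rw [hpi, Category.id_comp, hir]
  rw [← hid, Preadditive.sum_comp, Preadditive.comp_sum]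
  simp only [Category.assoc]

section FunctorCategory

variable (𝒳 : Set (RMod Λ))

instance resY_additive : (resY 𝒳).Additive where
  map_add {_ _ f g} := by
    ext Z h
    exact Preadditive.comp_add _ _ _ (h : Z.unop.obj ⟶ _) f g

lemma resY_obj_hom_eq_zero {Q : RMod Λ} (hQ : Q ∈ 𝒳) {G : FunCat 𝒳}
    (hG : IsZero (G.obj (op ⟨Q, hQ⟩))) (α : (resY 𝒳).obj Q ⟶ G) : α = 0 := by
  ext Z g
  let gX : Z.unop ⟶ ⟨Q, hQ⟩ := ObjectProperty.homMk g
  have hnat := congr_arg (fun f => f (𝟙 Q)) (α.naturality gX.op)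
  have h0 : α.app (op ⟨Q, hQ⟩) (𝟙 Q) = 0 := (AddCommGrpCat.subsingleton_of_isZero hG).elim _ _
  calc α.app Z g = α.app Z (((resY 𝒳).obj Q).map gX.op (𝟙 Q)) :=
        congr_arg _ (Category.comp_id (g : Z.unop.obj ⟶ Q)).symm
    _ = G.map gX.op (α.app (op ⟨Q, hQ⟩) (𝟙 Q)) := hnat
    _ = 0 := by rw [h0, map_zero]

variable {P Q M : RMod Λ} (d : P ⟶ Q) (ε : Q ⟶ M) (w : d ≫ ε = 0)

def zetaObj.π : (resY 𝒳).obj Q ⟶ zetaObj 𝒳 d ε w :=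
  cokernel.π _ ≫ factorThruImage _

def zetaObj.ι : zetaObj 𝒳 d ε w ⟶ (resY 𝒳).obj M :=
  image.ι _

instance : Epi (zetaObj.π 𝒳 d ε w) := by unfold zetaObj.π zetaObj; infer_instance

lemma zetaObj.π_ι : zetaObj.π 𝒳 d ε w ≫ zetaObj.ι 𝒳 d ε w = (resY 𝒳).map ε := by
  unfold zetaObj.π zetaObj.ι zetaObj
  rw [Category.assoc, image.fac]
  exact cokernel.π_desc _ _ _

lemma zetaObj.π_ι_assoc {Z : FunCat 𝒳} (f : (resY 𝒳).obj M ⟶ Z) :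
    zetaObj.π 𝒳 d ε w ≫ zetaObj.ι 𝒳 d ε w ≫ f = (resY 𝒳).map ε ≫ f := by
  rw [← Category.assoc, zetaObj.π_ι]

lemma memKerEllLambda_zetaObj (hQ : Q ∈ 𝒳) [Projective Q] :
    MemKerEllLambda 𝒳 (zetaObj 𝒳 d ε w) := fun G _ hG η => by
  rw [← cancel_epi (zetaObj.π 𝒳 d ε w), comp_zero]
  exact resY_obj_hom_eq_zero 𝒳 hQ (hG ⟨Q, hQ⟩ ‹_›) _

lemma exists_isSplitEpi_biproduct_zetaObj [Epi ε] {Q' : RMod Λ} [Projective Q']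
    (hQ' : InAdd M Q') :
    ∃ (n : ℕ) (e : (⨁ fun _ : Fin n => zetaObj 𝒳 d ε w) ⟶ (resY 𝒳).obj Q'), IsSplitEpi e := by
  obtain ⟨n, i, r, hir⟩ := hQ'.exists_sum_comp_eq_id
  refine ⟨n, biproduct.desc fun k => zetaObj.ι 𝒳 d ε w ≫ (resY 𝒳).map (r k),
    ⟨biproduct.lift fun k => (resY 𝒳).map (Projective.factorThru (i k) ε) ≫ zetaObj.π 𝒳 d ε w, ?_⟩⟩
  simp_rw [biproduct.lift_desc, Category.assoc, zetaObj.π_ι_assoc, ← Functor.map_comp,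
    Projective.factorThru_comp_assoc]
  rw [← Functor.map_sum, hir, CategoryTheory.Functor.map_id]

end FunctorCategory

theorem statement17_general
    (Λ : Type u) [Ring Λ]
    (𝒳 : Set (RMod Λ))
    (h𝒳 : GoodSub (fun M : RMod Λ => Module.Finite Λᵐᵒᵖ M) 𝒳)
    (Xbar : RMod Λ) (hgen : IsAddGen 𝒳 Xbar)
    (P Q : RMod Λ)
    (hQ : Projective Q) (hQf : Module.Finite Λᵐᵒᵖ Q)
    (d : P ⟶ Q) (ε : Q ⟶ Xbar) (w : d ≫ ε = 0)
    (hepi : Epi ε) :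
    MemKerEllLambda 𝒳 (zetaObj 𝒳 d ε w) ∧
    (∀ (X₁ X₀ : RMod Λ), X₁ ∈ 𝒳 → X₀ ∈ 𝒳 → ∀ (d' : X₁ ⟶ X₀)
      (P' Q' : RMod Λ), Projective P' → Module.Finite Λᵐᵒᵖ P' →
        Projective Q' → Module.Finite Λᵐᵒᵖ Q' →
      ∀ (dF : P' ⟶ Q') (εF : Q' ⟶ cokernel d') (wF : dF ≫ εF = 0), Epi εF →
        (ShortComplex.mk dF εF wF).Exact →
        ∃ (n : ℕ) (e : (⨁ fun _ : Fin n => zetaObj 𝒳 d ε w) ⟶ cokernel ((resY 𝒳).map dF)),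
          Epi e) := by
  refine ⟨memKerEllLambda_zetaObj 𝒳 d ε w (h𝒳.proj_mem Q hQf hQ), ?_⟩
  intro X₁ X₀ _ _ d' P' Q' _ _ hQ' hQ'f dF εF wF _ _
  obtain ⟨n, e, _⟩ := exists_isSplitEpi_biproduct_zetaObj 𝒳 d ε w
    ((hgen.2 Q').1 (h𝒳.proj_mem Q' hQ'f hQ'))
  exact ⟨n, e ≫ cokernel.π _, epi_comp _ _⟩

/-- For `X = add Xbar` contravariantly finite containing the projectives,
`ζ^X_{Xbar}` lies in `Ker ℓ_λ`, and for every `F ∈ mod-X` (presented by `d' : X₁ ⟶ X₀`,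
so that `θ(F) = coker d'`), the functor `θ_λ(θ(F))` is an epimorphic image of a finite
direct sum of copies of `ζ^X_{Xbar}`, i.e. `θ_λθ(F) ∈ gen(ζ^X_{Xbar})`. -/
theorem statement17 (R₀ : Type u) [CommRing R₀] [IsArtinianRing R₀]
    (Λ : Type u) [Ring Λ] [Algebra R₀ Λ] [Module.Finite R₀ Λ]
    (𝒳 : Set (RMod Λ))
    (h𝒳 : GoodSub (fun M : RMod Λ => Module.Finite Λᵐᵒᵖ M) 𝒳)
    (Xbar : RMod Λ) (hgen : IsAddGen 𝒳 Xbar)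
    (P Q : RMod Λ) (hP : Projective P) (hPf : Module.Finite Λᵐᵒᵖ P)
    (hQ : Projective Q) (hQf : Module.Finite Λᵐᵒᵖ Q)
    (d : P ⟶ Q) (ε : Q ⟶ Xbar) (w : d ≫ ε = 0)
    (hepi : Epi ε) (hex : (ShortComplex.mk d ε w).Exact) :
    MemKerEllLambda 𝒳 (zetaObj 𝒳 d ε w) ∧
    (∀ (X₁ X₀ : RMod Λ), X₁ ∈ 𝒳 → X₀ ∈ 𝒳 → ∀ (d' : X₁ ⟶ X₀)
      (P' Q' : RMod Λ), Projective P' → Module.Finite Λᵐᵒᵖ P' →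
        Projective Q' → Module.Finite Λᵐᵒᵖ Q' →
      ∀ (dF : P' ⟶ Q') (εF : Q' ⟶ cokernel d') (wF : dF ≫ εF = 0), Epi εF →
        (ShortComplex.mk dF εF wF).Exact →
        ∃ (n : ℕ) (e : (⨁ fun _ : Fin n => zetaObj 𝒳 d ε w) ⟶ cokernel ((resY 𝒳).map dF)),
          Epi e) :=
  statement17_general Λ 𝒳 h𝒳 Xbar hgen P Q hQ hQf d ε w hepi

end RelAus
end
end
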